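/- arXiv:2206.00928 — 4 statements merged into one kernel-verified Lean document; each statement's English description precedes it below -/
import Mathlib

section
/- Let α ∈ {+,−}, G a bidirected graph, r a vertex of G, and x, y vertices of G. If both x and y can reach r by an α-ditrail but neither can reach r by a (−α)-ditrail, then there is no (−α,−α)-ditrail from x to y. -/
/-- A bidirected graph on vertex type `V`: each edge has two ends (`fst`, `snd`),
each carrying a sign (`true` = `+`, `false` = `-`). Loops are edges with `fst = snd`. -/
structure BG (V : Type) where
  E : Type
  fst : E → V
  snd : E → V
  s1 : E → Bool
  s2 : E → Bool

namespace BG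

variable {V : Type}

/-- A step is a traversal of an edge in one of the two directions. -/
abbrev Step (G : BG V) : Type := G.E × Bool

variable (G : BG V)

def src (st : G.Step) : V := if st.2 then G.fst st.1 else G.snd st.1
def tgt (st : G.Step) : V := if st.2 then G.snd st.1 else G.fst st.1
/-- sign of the edge at the source end of the step -/
def ssign (st : G.Step) : Bool := if st.2 then G.s1 st.1 else G.s2 st.1
/-- sign of the edge at the target end of the step -/
def tsign (st : G.Step) : Bool := if st.2 then G.s2 st.1 else G.s1 st.1

/-- `p` is a ditrail from `x` to `y`: an edge-simple walk such that at each internal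
vertex the sign of the entering edge-end and the sign of the leaving edge-end are opposite. -/
def IsDitrail (p : List G.Step) (x y : V) : Prop :=
  (p.map Prod.fst).Nodup ∧
  List.Chain' (fun a b => G.tgt a = G.src b ∧ G.tsign a = !G.ssign b) p ∧
  (∀ st, p.head? = some st → G.src st = x) ∧
  (∀ st, p.getLast? = some st → G.tgt st = y) ∧
  (p = [] → x = y)

/-- There is an `(α, β)`-ditrail from `x` to `y` using only edges from `Es` and avoiding
the vertex set `A`.  The trivial (empty) ditrail from `x` to `x` counts as an
`(!β, β)`-ditrail for each `β`. -/
def ReachWA (Es : Set G.E) (A : Set V) (α β : Bool) (x y : V) : Prop :=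
  ∃ p : List G.Step, G.IsDitrail p x y ∧ (∀ st ∈ p, st.1 ∈ Es) ∧
    x ∉ A ∧ (∀ st ∈ p, G.tgt st ∉ A) ∧
    (p.head?.map G.ssign).getD (!β) = α ∧ (p.getLast?.map G.tsign).getD β = β

/-- There is an `(α, β)`-ditrail from `x` to `y` using only edges from `Es`. -/
def ReachW (Es : Set G.E) (α β : Bool) (x y : V) : Prop := G.ReachWA Es ∅ α β x y

/-- There is an `(α, β)`-ditrail from `x` to `y` in `G`. -/
def Reach (α β : Bool) (x y : V) : Prop := G.ReachW Set.univ α β x y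

/-- There is an `α`-ditrail from `x` to `y` in `G` (only the starting sign is constrained). -/
def ReachS (α : Bool) (x y : V) : Prop := ∃ β, G.Reach α β x y

/-- There is an `α`-ditrail from `x` to `y` using only edges from `Es`. -/
def ReachWS (Es : Set G.E) (α : Bool) (x y : V) : Prop := ∃ β, G.ReachW Es α β x y

def Adj (u v : V) : Prop :=
  ∃ e : G.E, (G.fst e = u ∧ G.snd e = v) ∨ (G.fst e = v ∧ G.snd e = u)

/-- `G` is an `α`-radial with root `r`. -/
def IsRadial (α : Bool) (r : V) : Prop := ∀ v, G.Reach α (!α) v r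
/-- `G` is an `α`-semiradial with root `r`. -/
def IsSemiradial (α : Bool) (r : V) : Prop := ∀ v, G.ReachS α v r

/-- `x` is an (`α`-)strong vertex with respect to `r`. -/
def StrongVtx (α : Bool) (r x : V) : Prop :=
  G.Reach α (!α) x r ∧ G.Reach (!α) (!α) x r
/-- `x` is a sublinear vertex with respect to `r`. -/
def SublinearVtx (α : Bool) (r x : V) : Prop :=
  G.Reach α (!α) x r ∧ ¬ G.Reach (!α) (!α) x r
/-- `x` is an absolute vertex with respect to `r`. -/
def AbsoluteVtx (r x : V) : Prop := ∀ α : Bool, G.ReachS α x r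
/-- `x` is an `α`-linear vertex with respect to `r`. -/
def LinearVtx (α : Bool) (r x : V) : Prop := G.ReachS α x r ∧ ¬ G.ReachS (!α) x r

/-- sharpness at the root: every neighbor of `r` is linear. -/
def SharpAt (α : Bool) (r : V) : Prop := ∀ v, G.Adj v r → G.LinearVtx α r v

/-- `v` is joined to `r` by an edge whose end at `r` has sign `!α`. -/
def OppNbr (α : Bool) (r v : V) : Prop :=
  ∃ e : G.E, (G.fst e = r ∧ G.snd e = v ∧ G.s1 e = !α) ∨
    (G.snd e = r ∧ G.fst e = v ∧ G.s2 e = !α)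

/-- roundness: every vertex joined to `r` by an edge whose end at `r` has sign `!α` is strong. -/
def RoundAt (α : Bool) (r : V) : Prop := ∀ v, G.OppNbr α r v → G.StrongVtx α r v

/-- `e` is a cut edge of `S` whose end in `S` carries the sign `γ`. -/
def CutSign (S : Set V) (γ : Bool) (e : G.E) : Prop :=
  (G.fst e ∈ S ∧ G.snd e ∉ S ∧ G.s1 e = γ) ∨
  (G.snd e ∈ S ∧ G.fst e ∉ S ∧ G.s2 e = γ)

/-- edges of the subgraph of `G` induced by `S` -/
def inducedEdges (S : Set V) : Set G.E := {e | G.fst e ∈ S ∧ G.snd e ∈ S}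

/-- a simple diear relative to `S`: a nonempty ditrail whose first and last vertices
lie in `S` and whose internal vertices avoid `S`. -/
def IsSimpleDiear (S : Set V) (p : List G.Step) : Prop :=
  p ≠ [] ∧ ∃ u v, G.IsDitrail p u v ∧ u ∈ S ∧ v ∈ S ∧
    ∀ w ∈ p.dropLast.map G.tgt, w ∉ S

/-- a scoop diear relative to `S` with grip `e`: of the form `(y,e,x) + P` where `y ∈ S`,
`x ∉ S`, and `P` is a ditrail from `x` back to `y` ending with the reverse traversal of `e`,
whose internal vertices avoid `S`. -/
def IsScoopDiear (S : Set V) (e : G.E) (p : List G.Step) : Prop :=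
  ∃ d q, p = (e, d) :: q ∧ G.src (e, d) ∈ S ∧ G.tgt (e, d) ∉ S ∧
    G.IsDitrail q (G.tgt (e, d)) (G.src (e, d)) ∧
    q.getLast? = some (e, !d) ∧
    (∀ st, q.head? = some st → G.ssign st = !(G.tsign (e, d))) ∧
    ∀ w ∈ q.dropLast.map G.tgt, w ∉ S

/-- A subgraph of `G`. -/
structure Sub (G : BG V) where
  verts : Set V
  edges : Set G.E
  fst_mem : ∀ e ∈ edges, G.fst e ∈ verts
  snd_mem : ∀ e ∈ edges, G.snd e ∈ verts

variable {G}

def Sub.le (K L : G.Sub) : Prop := K.verts ⊆ L.verts ∧ K.edges ⊆ L.edges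

def Sub.union (K L : G.Sub) : G.Sub where
  verts := K.verts ∪ L.verts
  edges := K.edges ∪ L.edges
  fst_mem := fun e he => he.elim (fun h => Or.inl (K.fst_mem e h)) (fun h => Or.inr (L.fst_mem e h))
  snd_mem := fun e he => he.elim (fun h => Or.inl (K.snd_mem e h)) (fun h => Or.inr (L.snd_mem e h))

/-- the subgraph `K` is an `α`-semiradial with root `r`. -/
def Sub.IsSemiradial (K : G.Sub) (α : Bool) (r : V) : Prop :=
  r ∈ K.verts ∧ ∀ v ∈ K.verts, G.ReachWS K.edges α v r

/-- the subgraph `K` is an absolute semiradial with root `r`. -/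
def Sub.IsAbsolute (K : G.Sub) (r : V) : Prop := ∀ α : Bool, K.IsSemiradial α r

/-- the subgraph `K` is an `α`-radial with root `r`. -/
def Sub.IsRadial (K : G.Sub) (α : Bool) (r : V) : Prop :=
  r ∈ K.verts ∧ ∀ v ∈ K.verts, G.ReachW K.edges α (!α) v r

/-- the subgraph `K` is a strong `α`-radial with root `r`. -/
def Sub.IsStrong (K : G.Sub) (α : Bool) (r : V) : Prop :=
  K.IsRadial α r ∧ ∀ v ∈ K.verts, G.ReachW K.edges (!α) (!α) v r

/-- the subgraph `K` is an almost strong `α`-radial with root `r`. -/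
def Sub.IsAlmostStrong (K : G.Sub) (α : Bool) (r : V) : Prop :=
  K.IsRadial α r ∧ (∀ v ∈ K.verts, v ≠ r → G.ReachW K.edges (!α) (!α) v r) ∧
    ¬ G.ReachW K.edges (!α) (!α) r r

/-- the subgraph `K` is a linear `α`-semiradial with root `r`: no loop at `r`,
and no nontrivial `(!α)`-ditrail (within `K`) to `r`. -/
def Sub.IsLinearSR (K : G.Sub) (α : Bool) (r : V) : Prop :=
  K.IsSemiradial α r ∧ (¬ ∃ e ∈ K.edges, G.fst e = r ∧ G.snd e = r) ∧
    ∀ x p st, G.IsDitrail p x r → (∀ st' ∈ p, st'.1 ∈ K.edges) →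
      p.head? = some st → G.ssign st = α

/-- candidate for the linear ground: a linear `α`-semiradial with root `r`
all of whose non-root vertices are linear in `G`. -/
def Sub.IsLinearGroundCand (K : G.Sub) (α : Bool) (r : V) : Prop :=
  K.IsLinearSR α r ∧ ∀ v ∈ K.verts, v ≠ r → G.LinearVtx α r v

/-- candidate for the extended ground over the almost strong ground `H`. -/
def Sub.IsExtCand (H K : G.Sub) (α : Bool) (r : V) : Prop :=
  H.le K ∧ K.IsRadial α r ∧ ∀ v ∈ K.verts, v ∉ H.verts → G.SublinearVtx α r v

/-- the first shell of the extended ground `I` over the almost strong ground `H`: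
shell vertices having an `(α,!α)`-ditrail to `r` within `I` avoiding `V(H) \ {r}`. -/
def firstShell (H I : G.Sub) (α : Bool) (r : V) : Set V :=
  {x | x ∈ I.verts ∧ x ∉ H.verts ∧ G.ReachWA I.edges (H.verts \ {r}) α (!α) x r}

/-- adding new edges to `G`: each `f : F` becomes an edge between `a f` and `b f`
with signs `sa f` and `sb f` at these ends. -/
def addE (G : BG V) {F : Type} (a b : F → V) (sa sb : F → Bool) : BG V where
  E := G.E ⊕ F
  fst := Sum.elim G.fst a
  snd := Sum.elim G.snd b
  s1 := Sum.elim G.s1 sa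
  s2 := Sum.elim G.s2 sb

/-- deleting the edges in `D` from `G`. -/
def delE (G : BG V) (D : Set G.E) : BG V where
  E := {e : G.E // e ∉ D}
  fst e := G.fst e.1
  snd e := G.snd e.1
  s1 e := G.s1 e.1
  s2 e := G.s2 e.1

/-- contracting the vertex set `S` of `G` to the single vertex `r` (deleting the
edges lying within `S`, i.e. the arising loops). -/
noncomputable def contract (G : BG V) (S : Set V) (r : V) : BG V where
  E := {e : G.E // ¬(G.fst e ∈ S ∧ G.snd e ∈ S)}
  fst e := @ite _ (G.fst e.1 ∈ S) (Classical.propDecidable _) r (G.fst e.1)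
  snd e := @ite _ (G.snd e.1 ∈ S) (Classical.propDecidable _) r (G.snd e.1)
  s1 e := G.s1 e.1
  s2 e := G.s2 e.1

/-- a gluing sum `(G; s) ⊕ (H; T)`: every edge-end of `G` at `s` is redirected
to some vertex of `H` (given by `f1`, `f2`), keeping all signs. -/
noncomputable def glue {VG VH : Type} (G : BG VG) (H : BG VH) (s : VG)
    (f1 f2 : G.E → VH) : BG (VG ⊕ VH) where
  E := G.E ⊕ H.E
  fst := Sum.elim
    (fun e => @ite _ (G.fst e = s) (Classical.propDecidable _)
      (Sum.inr (f1 e)) (Sum.inl (G.fst e)))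
    (fun e => Sum.inr (H.fst e))
  snd := Sum.elim
    (fun e => @ite _ (G.snd e = s) (Classical.propDecidable _)
      (Sum.inr (f2 e)) (Sum.inl (G.snd e)))
    (fun e => Sum.inr (H.snd e))
  s1 := Sum.elim G.s1 H.s1
  s2 := Sum.elim G.s2 H.s2

/-- the copy of `H` inside a gluing sum, as a subgraph. -/
noncomputable def glueHcopy {VG VH : Type} (G : BG VG) (H : BG VH) (s : VG)
    (f1 f2 : G.E → VH) : (glue G H s f1 f2).Sub where
  verts := Set.range Sum.inr
  edges := Set.range Sum.inr
  fst_mem := by rintro _ ⟨e, rfl⟩; exact ⟨H.fst e, rfl⟩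
  snd_mem := by rintro _ ⟨e, rfl⟩; exact ⟨H.snd e, rfl⟩

variable (G)

/-- reversal of a step -/
def srev (st : G.Step) : G.Step := (st.1, !st.2)

@[simp] lemma src_srev (st : G.Step) : G.src (G.srev st) = G.tgt st := by
  obtain ⟨e, d⟩ := st; cases d <;> simp [srev, src, tgt]

@[simp] lemma tgt_srev (st : G.Step) : G.tgt (G.srev st) = G.src st := by
  obtain ⟨e, d⟩ := st; cases d <;> simp [srev, src, tgt]

@[simp] lemma ssign_srev (st : G.Step) : G.ssign (G.srev st) = G.tsign st := by
  obtain ⟨e, d⟩ := st; cases d <;> simp [srev, ssign, tsign]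

@[simp] lemma tsign_srev (st : G.Step) : G.tsign (G.srev st) = G.ssign st := by
  obtain ⟨e, d⟩ := st; cases d <;> simp [srev, ssign, tsign]

@[simp] lemma fst_srev (st : G.Step) : (G.srev st).1 = st.1 := rfl

lemma bool_eq_not_comm (a b : Bool) : a = !b ↔ b = !a := by cases a <;> cases b <;> simp

variable {G}

lemma ditrail_reverse {p : List G.Step} {x y : V} (h : G.IsDitrail p x y) :
    G.IsDitrail (p.reverse.map G.srev) y x := by
  obtain ⟨hnd, hch, hhd, hlast, hemp⟩ := h
  refine ⟨?_, ?_, ?_, ?_, ?_⟩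
  · have : (p.reverse.map G.srev).map Prod.fst = (p.map Prod.fst).reverse := by
      simp [List.map_map, Function.comp]
    rw [this]; exact List.nodup_reverse.mpr hnd
  · rw [List.Chain', List.isChain_map, List.isChain_reverse]
    refine hch.imp ?_
    intro a b hab
    simp only [flip, src_srev, tgt_srev, ssign_srev, tsign_srev]
    exact ⟨hab.1.symm, (bool_eq_not_comm _ _).mp hab.2⟩
  · intro st hst
    rw [List.head?_map, List.head?_reverse] at hst
    obtain ⟨a, ha, rfl⟩ := Option.map_eq_some_iff.mp hst
    rw [src_srev]; exact hlast a ha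
  · intro st hst
    rw [List.getLast?_map, List.getLast?_reverse] at hst
    obtain ⟨a, ha, rfl⟩ := Option.map_eq_some_iff.mp hst
    rw [tgt_srev]; exact hhd a ha
  · intro h0
    simp only [List.map_eq_nil_iff, List.reverse_eq_nil_iff] at h0
    exact (hemp h0).symm

lemma ditrail_append {p q : List G.Step} {x y z : V}
    (hp : G.IsDitrail p x y) (hq : G.IsDitrail q y z)
    (hdisj : ∀ e ∈ p.map Prod.fst, e ∉ q.map Prod.fst)
    (hj : ∀ a b, p.getLast? = some a → q.head? = some b → G.tsign a = !G.ssign b) :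
    G.IsDitrail (p ++ q) x z := by
  obtain ⟨hnd, hch, hhd, hlast, hemp⟩ := hp
  obtain ⟨hnd', hch', hhd', hlast', hemp'⟩ := hq
  refine ⟨?_, ?_, ?_, ?_, ?_⟩
  · rw [List.map_append]
    exact hnd.append hnd' (List.disjoint_left.mpr hdisj)
  · rw [List.Chain', List.isChain_append]
    refine ⟨hch, hch', fun a ha b hb => ⟨?_, hj a b ha hb⟩⟩
    rw [hlast a ha, hhd' b hb]
  · intro st hst
    rw [List.head?_append] at hst
    rcases hp0 : p.head? with _ | a
    · rw [hp0, Option.none_or] at hst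
      rw [hhd' st hst, ← hemp (List.head?_eq_none_iff.mp hp0)]
    · rw [hp0] at hst
      have : a = st := by simpa using hst
      subst this
      exact hhd a hp0
  · intro st hst
    rw [List.getLast?_append] at hst
    rcases hq0 : q.getLast? with _ | a
    · rw [hq0, Option.none_or] at hst
      rw [hlast st hst, hemp' (List.getLast?_eq_none_iff.mp hq0)]
    · rw [hq0] at hst
      have : a = st := by simpa using hst
      subst this
      exact hlast' a hq0
  · intro h0
    rw [List.append_eq_nil_iff] at h0
    rw [hemp h0.1, hemp' h0.2]

lemma ditrail_prefix {p q : List G.Step} {x y : V}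
    (h : G.IsDitrail (p ++ q) x y) {st : G.Step} (hst : q.head? = some st) :
    G.IsDitrail p x (G.src st) := by
  obtain ⟨hnd, hch, hhd, hlast, hemp⟩ := h
  rw [List.map_append] at hnd
  rw [List.Chain', List.isChain_append] at hch
  refine ⟨hnd.of_append_left, hch.1, ?_, ?_, ?_⟩
  · intro a ha
    refine hhd a ?_
    rw [List.head?_append, ha]; rfl
  · intro a ha
    exact (hch.2.2 a ha st hst).1
  · rintro rfl
    have : (([] : List G.Step) ++ q).head? = some st := hst
    exact (hhd st this).symm

lemma ditrail_suffix {p q : List G.Step} {x y : V}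
    (h : G.IsDitrail (p ++ q) x y) {st : G.Step} (hst : q.head? = some st) :
    G.IsDitrail q (G.src st) y := by
  obtain ⟨hnd, hch, hhd, hlast, hemp⟩ := h
  rw [List.map_append] at hnd
  rw [List.Chain', List.isChain_append] at hch
  have hqne : q ≠ [] := by rintro rfl; simp at hst
  refine ⟨hnd.of_append_right, hch.2.1, ?_, ?_, ?_⟩
  · intro a ha
    rw [ha] at hst; injection hst with h'; rw [h']
  · intro a ha
    refine hlast a ?_
    rw [List.getLast?_append, ha]; rfl
  · intro h0; exact absurd h0 hqne

lemma ditrail_junction {p q : List G.Step} {x y : V}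
    (h : G.IsDitrail (p ++ q) x y) {a b : G.Step}
    (ha : p.getLast? = some a) (hb : q.head? = some b) :
    G.tgt a = G.src b ∧ G.tsign a = !G.ssign b := by
  obtain ⟨-, hch, -, -, -⟩ := h
  rw [List.Chain', List.isChain_append] at hch
  exact hch.2.2 a ha b hb

lemma reachS_of_ditrail {p : List G.Step} {x z : V} (hp : G.IsDitrail p x z)
    (hne : p ≠ []) (α : Bool) (hs : ∀ st, p.head? = some st → G.ssign st = α) :
    G.ReachS α x z := by
  refine ⟨G.tsign (p.getLast hne), p, hp, fun st _ => Set.mem_univ _,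
    Set.notMem_empty x, fun st _ => Set.notMem_empty _, ?_, ?_⟩
  · rw [List.head?_eq_head hne]
    exact hs _ (List.head?_eq_head hne)
  · rw [List.getLast?_eq_getLast hne]; rfl

lemma exists_last_split {α : Type*} {l : List α} {P : α → Prop}
    (h : ∃ a ∈ l, P a) : ∃ l₁ a l₂, l = l₁ ++ a :: l₂ ∧ P a ∧ ∀ b ∈ l₂, ¬ P b := by
  induction l with
  | nil => simp at h
  | cons c t ih =>
    by_cases ht : ∃ a ∈ t, P a
    · obtain ⟨l₁, a, l₂, rfl, hPa, hl₂⟩ := ih ht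
      exact ⟨c :: l₁, a, l₂, rfl, hPa, hl₂⟩
    · have hPc : P c := by
        obtain ⟨a, ha, hPa⟩ := h
        rcases List.mem_cons.mp ha with rfl | ha'
        · exact hPa
        · exact absurd ⟨a, ha', hPa⟩ ht
      exact ⟨[], c, t, rfl, hPc, fun b hb hPb => ht ⟨b, hb, hPb⟩⟩

end BG
theorem stmt0 {V : Type} (G : BG V) (α : Bool) (r x y : V)
    (hx : G.ReachS α x r) (hy : G.ReachS α y r)
    (hx' : ¬ G.ReachS (!α) x r) (hy' : ¬ G.ReachS (!α) y r) :
    ¬ G.Reach (!α) (!α) x y := by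
  intro hP
  obtain ⟨p, hp, -, -, -, hps, hpt⟩ := hP
  have hpne : p ≠ [] := by
    rintro rfl
    simp at hps
  have hps' : ∀ st, p.head? = some st → G.ssign st = !α := by
    intro st h; rw [h] at hps; simpa using hps
  have hpt' : ∀ st, p.getLast? = some st → G.tsign st = !α := by
    intro st h; rw [h] at hpt; simpa using hpt
  obtain ⟨β, q, hq, -, -, -, hqs, hqt⟩ := hy
  by_cases hshare : ∃ st ∈ q, st.1 ∈ p.map Prod.fst
  · -- some edge of q appears in p; take the last occurrence along q
    obtain ⟨q₁, st0, q₂, hqeq, hmem, hq₂⟩ := BG.exists_last_split hshare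
    obtain ⟨a, hin, hae⟩ := List.mem_map.mp hmem
    obtain ⟨e, d⟩ := a
    obtain ⟨e', d'⟩ := st0
    simp only at hae
    subst hae
    obtain ⟨p₁, p₂, hpeq⟩ := List.append_of_mem hin
    -- nodup facts
    have hnd : (p₁.map Prod.fst ++ (e :: p₂.map Prod.fst)).Nodup := by
      have := hp.1
      rw [hpeq, List.map_append, List.map_cons] at this
      exact this
    obtain ⟨hnd1, hnd2, hnddisj⟩ := List.nodup_append'.mp hnd
    have he1 : e ∉ p₁.map Prod.fst := fun h => hnddisj h List.mem_cons_self
    have he2 : e ∉ p₂.map Prod.fst := (List.nodup_cons.mp hnd2).1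
    -- suffix ditrail of q starting with (e, d')
    rw [hqeq] at hq
    have hqsuf : G.IsDitrail ((e, d') :: q₂) (G.src (e, d')) r :=
      BG.ditrail_suffix hq rfl
    by_cases hdd : d' = d
    · -- glue p₁ with (e,d) :: q₂ : a (!α)-ditrail from x to r
      subst hdd
      rw [hpeq] at hp
      have hppre : G.IsDitrail p₁ x (G.src (e, d')) :=
        BG.ditrail_prefix hp rfl
      have hdisj : ∀ f ∈ p₁.map Prod.fst, f ∉ ((e, d') :: q₂).map Prod.fst := by
        intro f hf hmem'
        rw [List.map_cons] at hmem'
        rcases List.mem_cons.mp hmem' with rfl | hmem'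
        · exact he1 hf
        · obtain ⟨b, hb, rfl⟩ := List.mem_map.mp hmem'
          refine hq₂ b hb ?_
          rw [hpeq, List.map_append]
          exact List.mem_append_left _ hf
      have hj : ∀ a b, p₁.getLast? = some a → ((e, d') :: q₂).head? = some b →
          G.tsign a = !G.ssign b := by
        intro a b ha hb
        have hb' : (e, d') = b := by simpa using hb
        subst hb'
        exact (BG.ditrail_junction hp ha rfl).2
      have hW := BG.ditrail_append hppre hqsuf hdisj hj
      have hWne : p₁ ++ (e, d') :: q₂ ≠ [] := by simp
      refine hx' (BG.reachS_of_ditrail hW hWne (!α) ?_)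
      intro st hst
      apply hps'
      rw [hpeq, List.head?_append]
      rw [List.head?_append] at hst
      cases h1 : p₁.head? <;> rw [h1] at hst <;> simp_all
    · have hdd' : d' = !d := by cases d <;> cases d' <;> simp at hdd ⊢
      subst hdd'
      have hsrc : G.src (e, !d) = G.tgt (e, d) := G.src_srev (e, d)
      have hssign : G.ssign (e, !d) = G.tsign (e, d) := G.ssign_srev (e, d)
      by_cases hp₂ : p₂ = []
      · -- (e,d) is the last step of p: (e,!d)::q₂ is a (!α)-ditrail from y to r
        subst hp₂
        have hplast : p.getLast? = some (e, d) := by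
          rw [hpeq]; exact List.getLast?_concat
        have hty : G.tgt (e, d) = y := hp.2.2.2.1 _ hplast
        have hts : G.tsign (e, d) = !α := hpt' _ hplast
        rw [hsrc, hty] at hqsuf
        refine hy' (BG.reachS_of_ditrail hqsuf (List.cons_ne_nil _ _) (!α) ?_)
        intro st hst
        have : (e, !d) = st := by simpa using hst
        subst this
        rw [hssign, hts]
      · -- glue reverse of p₂ with (e,!d) :: q₂ : a (!α)-ditrail from y to r
        have hpeq' : p = (p₁ ++ [(e, d)]) ++ p₂ := by rw [hpeq]; simp
        rw [hpeq'] at hp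
        have hb₀ : p₂.head? = some (p₂.head hp₂) := List.head?_eq_head hp₂
        set b₀ := p₂.head hp₂ with hb₀def
        have hpsuf : G.IsDitrail p₂ (G.src b₀) y := BG.ditrail_suffix hp hb₀
        have hjp : G.tgt (e, d) = G.src b₀ ∧ G.tsign (e, d) = !G.ssign b₀ :=
          BG.ditrail_junction hp (List.getLast?_concat) hb₀
        have hrev := BG.ditrail_reverse hpsuf
        rw [← hjp.1, ← hsrc] at hrev
        have hdisj : ∀ f ∈ (p₂.reverse.map G.srev).map Prod.fst,
            f ∉ ((e, !d) :: q₂).map Prod.fst := by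
          intro f hf hmem'
          have hf2 : f ∈ p₂.map Prod.fst := by
            simp only [List.map_map] at hf
            have : (Prod.fst ∘ G.srev) = (Prod.fst : G.Step → G.E) := rfl
            rw [this] at hf
            exact List.mem_reverse.mp (by simpa using hf)
          rw [List.map_cons] at hmem'
          rcases List.mem_cons.mp hmem' with rfl | hmem'
          · exact he2 hf2
          · obtain ⟨b, hb, rfl⟩ := List.mem_map.mp hmem'
            refine hq₂ b hb ?_
            rw [hpeq, List.map_append, List.map_cons]
            exact List.mem_append_right _ (List.mem_cons_of_mem _ hf2)
        have hj : ∀ a b, (p₂.reverse.map G.srev).getLast? = some a →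
            ((e, !d) :: q₂).head? = some b → G.tsign a = !G.ssign b := by
          intro a b ha hb
          have hb' : (e, !d) = b := by simpa using hb
          subst hb'
          have ha' : a = G.srev b₀ := by
            rw [List.getLast?_map, List.getLast?_reverse, hb₀] at ha
            simpa using ha.symm
          subst ha'
          rw [G.tsign_srev, hssign]
          exact (BG.bool_eq_not_comm _ _).mp hjp.2
        have hW := BG.ditrail_append hrev hqsuf hdisj hj
        have hWne : p₂.reverse.map G.srev ++ (e, !d) :: q₂ ≠ [] := by simp
        refine hy' (BG.reachS_of_ditrail hW hWne (!α) ?_)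
        intro st hst
        have hp₂l : p₂.getLast? = some (p₂.getLast hp₂) :=
          List.getLast?_eq_getLast hp₂
        have hhd : (p₂.reverse.map G.srev ++ (e, !d) :: q₂).head? =
            some (G.srev (p₂.getLast hp₂)) := by
          rw [List.head?_append, List.head?_map, List.head?_reverse, hp₂l]
          rfl
        rw [hhd] at hst
        have : st = G.srev (p₂.getLast hp₂) := by simpa using hst.symm
        subst this
        rw [G.ssign_srev]
        refine hpt' _ ?_
        rw [hpeq', List.getLast?_append, hp₂l]
        rfl
  · -- no shared edge: glue p and q directly (or p alone if q is trivial)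
    by_cases hq0 : q = []
    · subst hq0
      have hyr : y = r := hq.2.2.2.2 rfl
      subst hyr
      exact hx' ⟨!α, p, hp, fun st _ => Set.mem_univ _, Set.notMem_empty x,
        fun st _ => Set.notMem_empty _, hps, hpt⟩
    · have hqs' : ∀ st, q.head? = some st → G.ssign st = α := by
        intro st h; rw [h] at hqs; simpa using hqs
      have hdisj : ∀ f ∈ p.map Prod.fst, f ∉ q.map Prod.fst := by
        intro f hf hmem'
        obtain ⟨b, hb, rfl⟩ := List.mem_map.mp hmem'
        exact hshare ⟨b, hb, hf⟩
      have hj : ∀ a b, p.getLast? = some a → q.head? = some b →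
          G.tsign a = !G.ssign b := by
        intro a b ha hb
        rw [hpt' a ha, hqs' b hb]
      have hW := BG.ditrail_append hp hq hdisj hj
      have hWne : p ++ q ≠ [] := by simp [hpne]
      refine hx' (BG.reachS_of_ditrail hW hWne (!α) ?_)
      intro st hst
      apply hps'
      rw [List.head?_append] at hst
      rw [List.head?_eq_head hpne] at hst ⊢
      simpa using hst
end

section
/- Let α ∈ {+,−}, G a bidirected graph, r a vertex of G, and x, y vertices of G. If both x and y can reach r by an (α,−α)-ditrail but neither can reach r by a (−α,−α)-ditrail, then there is no (−α,−α)-ditrail from x to y. -/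
namespace BG
variable {V : Type} {G : BG V}

def rv (G : BG V) (st : G.Step) : G.Step := (st.1, !st.2)

lemma src_rv (st : G.Step) : G.src (G.rv st) = G.tgt st := by
  obtain ⟨e, d⟩ := st; cases d <;> rfl
lemma tgt_rv (st : G.Step) : G.tgt (G.rv st) = G.src st := by
  obtain ⟨e, d⟩ := st; cases d <;> rfl
lemma ssign_rv (st : G.Step) : G.ssign (G.rv st) = G.tsign st := by
  obtain ⟨e, d⟩ := st; cases d <;> rfl
lemma tsign_rv (st : G.Step) : G.tsign (G.rv st) = G.ssign st := by
  obtain ⟨e, d⟩ := st; cases d <;> rfl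

lemma chain_rv {l : List G.Step}
    (h : l.Chain' (fun a b => G.tgt a = G.src b ∧ G.tsign a = !G.ssign b)) :
    ((l.map (G.rv)).reverse).Chain' (fun a b => G.tgt a = G.src b ∧ G.tsign a = !G.ssign b) := by
  show List.IsChain _ _
  rw [List.isChain_reverse, List.isChain_map]
  refine h.imp ?_
  rintro a b ⟨h1, h2⟩
  refine ⟨by rw [tgt_rv, src_rv, h1], ?_⟩
  rw [tsign_rv, ssign_rv, h2, Bool.not_not]

lemma head?_append_cons {σ : Type*} (A : List σ) (c : σ) (B C : List σ) :
    (A ++ c :: B).head? = (A ++ c :: C).head? := by cases A <;> simp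

lemma split_last {σ : Type*} (P : σ → Prop) (Q : List σ) :
    (∀ a ∈ Q, ¬ P a) ∨ ∃ Q₁ c Q₂, Q = Q₁ ++ c :: Q₂ ∧ P c ∧ ∀ a ∈ Q₂, ¬ P a := by
  induction Q with
  | nil => exact Or.inl (by simp)
  | cons c Q ih =>
    rcases ih with h | ⟨Q₁, c', Q₂, rfl, hc', hQ₂⟩
    · by_cases hc : P c
      · exact Or.inr ⟨[], c, Q, by simp, hc, h⟩
      · refine Or.inl ?_
        intro a ha
        rcases List.mem_cons.mp ha with rfl | ha
        · exact hc
        · exact h a ha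
    · exact Or.inr ⟨c :: Q₁, c', Q₂, by simp, hc', hQ₂⟩

lemma reach_aux (α : Bool) (z r : V) (A B : List G.Step) (c : G.Step)
    (h1 : (A ++ [c]).Chain' (fun a b => G.tgt a = G.src b ∧ G.tsign a = !G.ssign b))
    (h2 : (c :: B).Chain' (fun a b => G.tgt a = G.src b ∧ G.tsign a = !G.ssign b))
    (hnd : ((A ++ c :: B).map Prod.fst).Nodup)
    (hhead : ∀ st, (A ++ c :: B).head? = some st → G.src st = z ∧ G.ssign st = !α)
    (hlast : ∀ st, (c :: B).getLast? = some st → G.tgt st = r ∧ G.tsign st = !α) :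
    G.Reach (!α) (!α) z r := by
  obtain ⟨hh, hht⟩ := List.isChain_append.mp h1
  have hne : (A ++ c :: B) ≠ [] := by simp
  obtain ⟨sh, hsh⟩ := Option.isSome_iff_exists.mp (List.isSome_head?.mpr hne)
  obtain ⟨sl, hsl⟩ := Option.isSome_iff_exists.mp
    (List.getLast?_isSome.mpr (List.cons_ne_nil c B))
  have hgl : (A ++ c :: B).getLast? = some sl := by
    rw [List.getLast?_append, hsl]; rfl
  refine ⟨A ++ c :: B, ⟨hnd, ?_, ?_, ?_, fun h => absurd h hne⟩,
    fun st _ => Set.mem_univ _, Set.notMem_empty z,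
    fun st _ => Set.notMem_empty _, ?_, ?_⟩
  · refine List.isChain_append.mpr ⟨hh, h2, ?_⟩
    intro a ha b hb
    simp only [List.head?_cons, Option.mem_def, Option.some.injEq] at hb
    subst hb
    exact hht.2 a ha c (by simp)
  · intro st hst
    rw [hsh] at hst
    cases Option.some.inj hst
    exact (hhead sh hsh).1
  · intro st hst
    rw [hgl] at hst
    cases Option.some.inj hst
    exact (hlast sl hsl).1
  · rw [hsh]
    exact (hhead sh hsh).2
  · rw [hgl]
    exact (hlast sl hsl).2

end BG
theorem stmt1 {V : Type} (G : BG V) (α : Bool) (r x y : V)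
    (hx : G.Reach α (!α) x r) (hy : G.Reach α (!α) y r)
    (hx' : ¬ G.Reach (!α) (!α) x r) (hy' : ¬ G.Reach (!α) (!α) y r) :
    ¬ G.Reach (!α) (!α) x y := by
  rintro ⟨T, ⟨hTnd, hTch, hThead, hTlast, -⟩, -, -, -, hTs, hTe⟩
  have hTne : T ≠ [] := by rintro rfl; simp at hTs
  obtain ⟨th, hth⟩ := Option.isSome_iff_exists.mp (List.isSome_head?.mpr hTne)
  obtain ⟨tl, htl⟩ := Option.isSome_iff_exists.mp (List.getLast?_isSome.mpr hTne)
  have hthx : G.src th = x := hThead th hth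
  have hths : G.ssign th = !α := by rw [hth] at hTs; simpa using hTs
  have htly : G.tgt tl = y := hTlast tl htl
  have htls : G.tsign tl = !α := by rw [htl] at hTe; simpa using hTe
  obtain ⟨Q, ⟨hQnd, hQch, hQhead, hQlast, hQnil⟩, -, -, -, hQs, hQe⟩ := hy
  rcases Q with _ | ⟨c, B⟩
  · exact hx' ⟨T, ⟨hTnd, hTch, hThead,
      fun st hst => (hQnil rfl) ▸ hTlast st hst, fun h => absurd h hTne⟩,
      fun _ _ => Set.mem_univ _, Set.notMem_empty _,
      fun _ _ => Set.notMem_empty _, hTs, hTe⟩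
  · have hcy : G.src c = y := hQhead c rfl
    have hcs : G.ssign c = α := by simpa using hQs
    rcases BG.split_last (fun st : G.Step => st.1 ∈ T.map Prod.fst) (c :: B) with
      hdis | ⟨Q₁, q, Q₂, hQeq, hqmem, hQ₂⟩
    · refine hx' (BG.reach_aux α x r T B c ?_ hQch ?_ ?_ ?_)
      · refine List.isChain_append.mpr ⟨hTch, List.isChain_singleton c, ?_⟩
        intro a ha b hb
        simp only [List.head?_cons, Option.mem_def, Option.some.injEq] at hb
        subst hb
        rw [Option.mem_def, htl] at ha
        obtain rfl := Option.some.inj ha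
        exact ⟨htly.trans hcy.symm, by rw [htls, hcs]⟩
      · rw [List.map_append, List.nodup_append]
        refine ⟨hTnd, hQnd, fun a haT b haQ hab => ?_⟩
        subst hab
        obtain ⟨st, hstQ, rfl⟩ := List.mem_map.mp haQ
        exact hdis st hstQ haT
      · intro st hst
        rw [List.head?_append, hth] at hst
        obtain rfl := Option.some.inj hst
        exact ⟨hthx, hths⟩
      · intro st hst
        exact ⟨hQlast st hst, by rw [hst] at hQe; simpa using hQe⟩
    · obtain ⟨t, htT, htq⟩ := List.mem_map.mp hqmem
      obtain ⟨T₁, T₂, hTeq⟩ := List.append_of_mem htT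
      have hQch2 : (q :: Q₂).Chain'
          (fun a b => G.tgt a = G.src b ∧ G.tsign a = !G.ssign b) := by
        have h := hQch; rw [hQeq] at h
        exact (List.isChain_append.mp h).2.1
      have hQlast2 : ∀ st, (q :: Q₂).getLast? = some st →
          G.tgt st = r ∧ G.tsign st = !α := by
        intro st hst
        have hst' : (c :: B).getLast? = some st := by
          rw [hQeq, List.getLast?_append, hst]; rfl
        exact ⟨hQlast st hst', by rw [hst'] at hQe; simpa using hQe⟩
      have hQnd2 : ((q :: Q₂).map Prod.fst).Nodup := by
        have h := hQnd; rw [hQeq, List.map_append, List.nodup_append] at h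
        exact h.2.1
      have hTnd' := hTnd
      rw [hTeq, List.map_append, List.nodup_append, List.map_cons,
        List.nodup_cons] at hTnd'
      obtain ⟨hT1nd, ⟨htT2, hT2nd⟩, hT12dis⟩ := hTnd'
      by_cases hd : q.2 = t.2
      · have hqt : q = t := Prod.ext htq.symm hd
        subst hqt
        refine hx' (BG.reach_aux α x r T₁ Q₂ q ?_ hQch2 ?_ ?_ hQlast2)
        · have h := hTch
          rw [hTeq, show T₁ ++ q :: T₂ = (T₁ ++ [q]) ++ T₂ by simp] at h
          exact (List.isChain_append.mp h).1
        · rw [List.map_append, List.nodup_append]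
          refine ⟨hT1nd, hQnd2, fun a haT b haQ hab => ?_⟩
          subst hab
          rw [List.map_cons, List.mem_cons] at haQ
          rcases haQ with rfl | haQ
          · exact hT12dis _ haT _ (by simp) rfl
          · obtain ⟨st, hstQ, rfl⟩ := List.mem_map.mp haQ
            refine hQ₂ st hstQ ?_
            rw [hTeq]
            simp only [List.map_append, List.map_cons, List.mem_append, List.mem_cons]
            exact Or.inl haT
        · intro st hst
          rw [BG.head?_append_cons T₁ q Q₂ T₂, ← hTeq, hth] at hst
          obtain rfl := Option.some.inj hst
          exact ⟨hthx, hths⟩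
      · have hd' : q.2 = !t.2 := by
          cases hq2 : q.2 <;> cases ht2 : t.2 <;> simp [hq2, ht2] at hd ⊢
        have hqt : q = G.rv t := Prod.ext htq.symm hd'
        have hLform : (T₂.map G.rv).reverse ++ q :: Q₂ =
            ((t :: T₂).map G.rv).reverse ++ Q₂ := by
          subst hqt; simp
        obtain ⟨sl, hsl⟩ := Option.isSome_iff_exists.mp
          (List.getLast?_isSome.mpr (List.cons_ne_nil t T₂))
        have hsltl : sl = tl := by
          have : T.getLast? = some sl := by
            rw [hTeq, List.getLast?_append, hsl]; rfl
          rw [htl] at this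
          exact (Option.some.inj this).symm
        subst hsltl
        refine hy' (BG.reach_aux α y r ((T₂.map G.rv).reverse) Q₂ q ?_ hQch2 ?_ ?_ hQlast2)
        · have hct : (t :: T₂).Chain'
              (fun a b => G.tgt a = G.src b ∧ G.tsign a = !G.ssign b) := by
            have h := hTch; rw [hTeq] at h
            exact (List.isChain_append.mp h).2.1
          have h := BG.chain_rv hct
          rw [show ((t :: T₂).map G.rv).reverse
              = (T₂.map G.rv).reverse ++ [G.rv t] by simp] at h
          rw [hqt]
          exact h
        · have hmf : ((T₂.map G.rv).reverse).map Prod.fst = (T₂.map Prod.fst).reverse := by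
            rw [List.map_reverse, List.map_map]; rfl
          rw [List.map_append, List.nodup_append, hmf]
          refine ⟨(List.nodup_reverse.mpr hT2nd), hQnd2, fun a haT b haQ hab => ?_⟩
          subst hab
          rw [List.mem_reverse] at haT
          rw [List.map_cons, List.mem_cons] at haQ
          rcases haQ with rfl | haQ
          · rw [← htq] at haT
            exact htT2 haT
          · obtain ⟨st, hstQ, rfl⟩ := List.mem_map.mp haQ
            refine hQ₂ st hstQ ?_
            rw [hTeq]
            simp only [List.map_append, List.map_cons, List.mem_append, List.mem_cons]
            exact Or.inr (Or.inr haT)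
        · intro st hst
          rw [hLform, List.head?_append, List.head?_reverse, List.getLast?_map,
            hsl] at hst
          simp only [Option.map_some] at hst
          obtain rfl := Option.some.inj hst
          exact ⟨(BG.src_rv sl).trans htly, (BG.ssign_rv sl).trans htls⟩
end

section
/- Let α ∈ {+,−}, G a bidirected graph, and H an induced subgraph of G that is an α-radial with root r ∈ V(H). Assume no vertex of H adjacent to V(G)∖V(H) has a (−α,−α)-ditrail to r in G. Let G′ be obtained from G by adding edges between vertices of V(H) that have no (−α,−α)-ditrail to r in G and vertices of V(G)∖V(H), where the ends in V(H) all carry sign α. Then for each β ∈ {+,−}, the set of vertices with a (β,−α)-ditrail to r is the same in G′ as in G. -/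
namespace BGaux

open BG List

variable {V : Type} {G : BG V}

/-- reversal of a step -/
def rev (G : BG V) (st : G.Step) : G.Step := (st.1, !st.2)

@[simp] lemma rev_fst (st : G.Step) : (rev G st).1 = st.1 := rfl

@[simp] lemma src_rev (st : G.Step) : G.src (rev G st) = G.tgt st := by
  obtain ⟨e, d⟩ := st; cases d <;> rfl
@[simp] lemma tgt_rev (st : G.Step) : G.tgt (rev G st) = G.src st := by
  obtain ⟨e, d⟩ := st; cases d <;> rfl
@[simp] lemma ssign_rev (st : G.Step) : G.ssign (rev G st) = G.tsign st := by
  obtain ⟨e, d⟩ := st; cases d <;> rfl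
@[simp] lemma tsign_rev (st : G.Step) : G.tsign (rev G st) = G.ssign st := by
  obtain ⟨e, d⟩ := st; cases d <;> rfl

lemma head?_append_cons {σ : Type*} (A : List σ) (s : σ) (B B' : List σ) :
    (A ++ s :: B).head? = (A ++ s :: B').head? := by cases A <;> rfl

/-- a one-step ditrail -/
lemma singleD (st : G.Step) : G.IsDitrail [st] (G.src st) (G.tgt st) := by
  refine ⟨by simp, by simp [List.Chain'], ?_, ?_, by simp⟩
  · rintro st' h; cases h; rfl
  · rintro st' h
    rw [show ([st] : List G.Step).getLast? = some st from rfl] at h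
    cases h; rfl

/-- split a ditrail at a designated step -/
lemma split {p A B : List G.Step} {s : G.Step} {x y : V}
    (h : G.IsDitrail p x y) (hp : p = A ++ s :: B) :
    G.IsDitrail A x (G.src s) ∧ G.IsDitrail B (G.tgt s) y ∧
      (∀ a, A.getLast? = some a → G.tgt a = G.src s ∧ G.tsign a = !G.ssign s) ∧
      (∀ c, B.head? = some c → G.tgt s = G.src c ∧ G.tsign s = !G.ssign c) := by
  obtain ⟨hnd, hch, hhd, hlast, hemp⟩ := h
  subst hp
  rw [map_append, nodup_append] at hnd
  obtain ⟨ndA, ndB', disj⟩ := hnd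
  unfold List.Chain' at hch
  rw [isChain_append] at hch
  obtain ⟨chA, chB', J⟩ := hch
  rw [isChain_cons] at chB'
  obtain ⟨JB, chB⟩ := chB'
  have JA : ∀ a, A.getLast? = some a → G.tgt a = G.src s ∧ G.tsign a = !G.ssign s :=
    fun a ha => J a ha s rfl
  refine ⟨⟨ndA, chA, ?_, ?_, ?_⟩, ⟨(List.nodup_cons.mp ndB').2, chB, ?_, ?_, ?_⟩, JA,
    fun c hc => JB c hc⟩
  · -- head of A is x
    intro st hst
    have hA : A ≠ [] := by rintro rfl; simp at hst
    apply hhd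
    rw [head?_append_of_ne_nil _ hA]; exact hst
  · -- last of A points to src s
    intro st hst; exact (JA st hst).1
  · -- A empty
    intro hA; subst hA
    exact (hhd s rfl).symm
  · -- head of B from tgt s
    intro c hc; exact (JB c hc).1.symm
  · -- last of B is y
    intro c hc
    have hB : B ≠ [] := by rintro rfl; simp at hc
    apply hlast
    rw [getLast?_append_of_ne_nil _ (by simp : s :: B ≠ []),
      show s :: B = [s] ++ B from rfl, getLast?_append_of_ne_nil _ hB]
    exact hc
  · -- B empty
    intro hB; subst hB
    apply hlast
    rw [getLast?_append_of_ne_nil _ (by simp : [s] ≠ ([] : List G.Step))]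
    rfl

/-- concatenate two ditrails with compatible signs and disjoint edges -/
lemma appendD {A B : List G.Step} {x u y : V}
    (hA : G.IsDitrail A x u) (hB : G.IsDitrail B u y)
    (hJ : ∀ a c, A.getLast? = some a → B.head? = some c → G.tsign a = !G.ssign c)
    (hdis : ∀ st ∈ B, st.1 ∉ A.map Prod.fst) :
    G.IsDitrail (A ++ B) x y := by
  obtain ⟨ndA, chA, hdA, lsA, emA⟩ := hA
  obtain ⟨ndB, chB, hdB, lsB, emB⟩ := hB
  refine ⟨?_, ?_, ?_, ?_, ?_⟩
  · rw [map_append, nodup_append]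
    exact ⟨ndA, ndB, fun e heA e' heB => by
      obtain ⟨st, hst, rfl⟩ := List.mem_map.mp heB
      exact fun h => hdis st hst (h ▸ heA)⟩
  · unfold List.Chain'
    rw [isChain_append]
    exact ⟨chA, chB, fun a ha c hc =>
      ⟨by rw [lsA a ha, hdB c hc], hJ a c ha hc⟩⟩
  · intro st hst
    cases A with
    | nil => rw [emA rfl]; exact hdB st hst
    | cons a0 A' => exact hdA st (by rwa [head?_append_of_ne_nil _ (by simp)] at hst)
  · intro st hst
    cases B with
    | nil => rw [← emB rfl]; exact lsA st (by rwa [append_nil] at hst)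
    | cons b0 B' => exact lsB st (by rwa [getLast?_append_of_ne_nil _ (by simp)] at hst)
  · intro h
    rw [List.append_eq_nil_iff] at h
    rw [emA h.1, emB h.2]

/-- reversal of a ditrail -/
lemma reverseD {p : List G.Step} {x y : V} (h : G.IsDitrail p x y) :
    G.IsDitrail (p.reverse.map (rev G)) y x := by
  obtain ⟨nd, ch, hd, ls, em⟩ := h
  refine ⟨?_, ?_, ?_, ?_, ?_⟩
  · have : (p.reverse.map (rev G)).map Prod.fst = (p.map Prod.fst).reverse := by
      rw [map_map]
      show p.reverse.map Prod.fst = _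
      rw [map_reverse]
    rw [this, nodup_reverse]; exact nd
  · unfold List.Chain' at ch ⊢
    rw [isChain_map, isChain_reverse]
    refine ch.imp ?_
    intro a c hac
    refine ⟨by rw [tgt_rev, src_rev, hac.1], by rw [tsign_rev, ssign_rev, hac.2, Bool.not_not]⟩
  · intro st hst
    rw [head?_map, head?_reverse] at hst
    obtain ⟨st', hst', rfl⟩ := Option.map_eq_some_iff.mp hst
    rw [src_rev]; exact ls st' hst'
  · intro st hst
    rw [getLast?_map, getLast?_reverse] at hst
    obtain ⟨st', hst', rfl⟩ := Option.map_eq_some_iff.mp hst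
    rw [tgt_rev]; exact hd st' hst'
  · intro h
    simp only [map_eq_nil_iff, reverse_eq_nil_iff] at h
    exact (em h).symm

/-- find the last element of a list satisfying P, if any element does -/
lemma exists_last {σ : Type*} (P : σ → Prop) (l : List σ) (h : ∃ st ∈ l, P st) :
    ∃ l₁ ω l₂, l = l₁ ++ ω :: l₂ ∧ P ω ∧ ∀ st ∈ l₂, ¬ P st := by
  induction l using List.reverseRecOn with
  | nil => simp at h
  | append_singleton l c ih =>
    by_cases hc : P c
    · exact ⟨l, c, [], by simp, hc, by simp⟩
    · obtain ⟨st, hst, hP⟩ := h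
      rw [mem_append] at hst
      rcases hst with hst | hst
      · obtain ⟨l₁, ω, l₂, heq, hω, hl₂⟩ := ih ⟨st, hst, hP⟩
        refine ⟨l₁, ω, l₂ ++ [c], by rw [heq]; simp, hω, ?_⟩
        intro u hu
        rcases mem_append.mp hu with hu | hu
        · exact hl₂ u hu
        · rw [mem_singleton] at hu; subst hu; exact hc
      · rw [mem_singleton] at hst; subst hst; exact absurd hP hc

lemma reach_intro {p : List G.Step} {x y : V} {α β : Bool} (h : G.IsDitrail p x y)
    (h1 : (p.head?.map G.ssign).getD (!β) = α) (h2 : (p.getLast?.map G.tsign).getD β = β) :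
    G.Reach α β x y :=
  ⟨p, h, fun _ _ => Set.mem_univ _, Set.notMem_empty x, fun _ _ => Set.notMem_empty _, h1, h2⟩

section AddE

variable {F : Type} {a b : F → V} {sa sb : F → Bool}

/-- lifting a step of `G` to a step of `G.addE a b sa sb` -/
def lift (a : F → V) (b : F → V) (sa sb : F → Bool) (st : G.Step) :
    (G.addE a b sa sb).Step := (Sum.inl st.1, st.2)

@[simp] lemma lift_src (st : G.Step) :
    (G.addE a b sa sb).src (lift a b sa sb st) = G.src st := by
  obtain ⟨e, d⟩ := st; cases d <;> rfl
@[simp] lemma lift_tgt (st : G.Step) :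
    (G.addE a b sa sb).tgt (lift a b sa sb st) = G.tgt st := by
  obtain ⟨e, d⟩ := st; cases d <;> rfl
@[simp] lemma lift_ssign (st : G.Step) :
    (G.addE a b sa sb).ssign (lift a b sa sb st) = G.ssign st := by
  obtain ⟨e, d⟩ := st; cases d <;> rfl
@[simp] lemma lift_tsign (st : G.Step) :
    (G.addE a b sa sb).tsign (lift a b sa sb st) = G.tsign st := by
  obtain ⟨e, d⟩ := st; cases d <;> rfl

@[simp] lemma addE_src_inr_true (f : F) :
    (G.addE a b sa sb).src (Sum.inr f, true) = a f := rfl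
@[simp] lemma addE_tgt_inr_true (f : F) :
    (G.addE a b sa sb).tgt (Sum.inr f, true) = b f := rfl
@[simp] lemma addE_ssign_inr_true (f : F) :
    (G.addE a b sa sb).ssign (Sum.inr f, true) = sa f := rfl
@[simp] lemma addE_tsign_inr_true (f : F) :
    (G.addE a b sa sb).tsign (Sum.inr f, true) = sb f := rfl
@[simp] lemma addE_src_inr_false (f : F) :
    (G.addE a b sa sb).src (Sum.inr f, false) = b f := rfl
@[simp] lemma addE_tgt_inr_false (f : F) :
    (G.addE a b sa sb).tgt (Sum.inr f, false) = a f := rfl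
@[simp] lemma addE_ssign_inr_false (f : F) :
    (G.addE a b sa sb).ssign (Sum.inr f, false) = sb f := rfl
@[simp] lemma addE_tsign_inr_false (f : F) :
    (G.addE a b sa sb).tsign (Sum.inr f, false) = sa f := rfl

lemma lift_map_fst (q : List G.Step) :
    ((q.map (lift a b sa sb)).map Prod.fst) = (q.map Prod.fst).map Sum.inl := by
  rw [map_map, map_map]; rfl

lemma lift_head_ssign (q : List G.Step) :
    (q.map (lift a b sa sb)).head?.map (G.addE a b sa sb).ssign = q.head?.map G.ssign := by
  rw [head?_map, Option.map_map]
  cases q.head? <;> simp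

lemma lift_getLast_tsign (q : List G.Step) :
    (q.map (lift a b sa sb)).getLast?.map (G.addE a b sa sb).tsign = q.getLast?.map G.tsign := by
  rw [getLast?_map, Option.map_map]
  cases q.getLast? <;> simp

lemma lift_ditrail {q : List G.Step} {x y : V} (h : G.IsDitrail q x y) :
    (G.addE a b sa sb).IsDitrail (q.map (lift a b sa sb)) x y := by
  obtain ⟨nd, ch, hd, ls, em⟩ := h
  refine ⟨?_, ?_, ?_, ?_, ?_⟩
  · rw [lift_map_fst]; exact nd.map Sum.inl_injective
  · unfold List.Chain' at ch ⊢
    rw [isChain_map]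
    exact ch.imp fun a c hac => ⟨by rw [lift_tgt, lift_src, hac.1],
      by rw [lift_tsign, lift_ssign, hac.2]⟩
  · intro st hst
    rw [head?_map] at hst
    obtain ⟨st', hst', rfl⟩ := Option.map_eq_some_iff.mp hst
    rw [lift_src]; exact hd st' hst'
  · intro st hst
    rw [getLast?_map] at hst
    obtain ⟨st', hst', rfl⟩ := Option.map_eq_some_iff.mp hst
    rw [lift_tgt]; exact ls st' hst'
  · intro h; exact em (by simpa using h)

lemma unlift_ditrail {q : List G.Step} {x y : V}
    (h : (G.addE a b sa sb).IsDitrail (q.map (lift a b sa sb)) x y) :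
    G.IsDitrail q x y := by
  obtain ⟨nd, ch, hd, ls, em⟩ := h
  refine ⟨?_, ?_, ?_, ?_, ?_⟩
  · rw [lift_map_fst] at nd; exact nd.of_map _
  · unfold List.Chain' at ch ⊢
    rw [isChain_map] at ch
    exact ch.imp fun u v huv => ⟨by rw [← lift_tgt (a := a) (b := b) (sa := sa) (sb := sb) u,
      ← lift_src (a := a) (b := b) (sa := sa) (sb := sb) v, huv.1],
      by rw [← lift_tsign (a := a) (b := b) (sa := sa) (sb := sb) u,
        ← lift_ssign (a := a) (b := b) (sa := sa) (sb := sb) v, huv.2]⟩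
  · intro st hst
    rw [← lift_src (a := a) (b := b) (sa := sa) (sb := sb) st]
    exact hd _ (by rw [head?_map, hst]; rfl)
  · intro st hst
    rw [← lift_tgt (a := a) (b := b) (sa := sa) (sb := sb) st]
    exact ls _ (by rw [getLast?_map, hst]; rfl)
  · intro h; exact em (by simp [h])

/-- every list of steps of `G.addE` either consists of lifted steps, or splits at the
first new-edge step -/
lemma listSplit : ∀ p : List (G.addE a b sa sb).Step,
    (∃ q : List G.Step, p = q.map (lift a b sa sb)) ∨
    ∃ (q₁ : List G.Step) (f : F) (d : Bool) (q₂ : List (G.addE a b sa sb).Step),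
      p = q₁.map (lift a b sa sb) ++ (((Sum.inr f, d) : (G.addE a b sa sb).Step)) :: q₂ := by
  intro p
  induction p with
  | nil => exact Or.inl ⟨[], rfl⟩
  | cons st p ih =>
    obtain ⟨e | f, d⟩ := st
    · rcases ih with ⟨q, rfl⟩ | ⟨q₁, f, d', q₂, rfl⟩
      · exact Or.inl ⟨(e, d) :: q, rfl⟩
      · exact Or.inr ⟨(e, d) :: q₁, f, d', q₂, rfl⟩
    · exact Or.inr ⟨[], f, d, p, rfl⟩

end AddE

/-- Key concatenation lemma: a `(β,!α)`-ditrail from `x` to `u` plus an `(α,!α)`-ditrail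
from `u` to `r` yields a `(β,!α)`-ditrail from `x` to `r`, provided `u` has no
`(!α,!α)`-ditrail to `r`. -/
lemma concat_reach {α β : Bool} {r x u : V} (t w : List G.Step)
    (ht : G.IsDitrail t x u) (hw : G.IsDitrail w u r)
    (htβ : (t.head?.map G.ssign).getD α = β)
    (htend : ∀ st, t.getLast? = some st → G.tsign st = !α)
    (hwα : ∀ st, w.head? = some st → G.ssign st = α)
    (hwend : (w.getLast?.map G.tsign).getD (!α) = !α)
    (hu : ¬ G.Reach (!α) (!α) u r) :
    G.Reach β (!α) x r := by
  by_cases hshare : ∃ st ∈ w, st.1 ∈ t.map Prod.fst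
  · -- surgery needed
    obtain ⟨w₁, ω, w₂, hweq, hωP, hw₂⟩ := exists_last _ _ hshare
    obtain ⟨τ, hτt, hτ1⟩ := List.mem_map.mp hωP
    obtain ⟨t₁, t₂, hteq⟩ := List.append_of_mem hτt
    obtain ⟨htA, htB, hJA, hJB⟩ := split ht hteq
    obtain ⟨hwA, hwB, hwJA, hwJB⟩ := split hw hweq
    obtain ⟨e, d⟩ := τ
    obtain ⟨e', d'⟩ := ω
    subst hτ1
    -- nodup decomposition of t
    have hnd2 := ht.1
    rw [hteq, map_append, map_cons] at hnd2
    rw [nodup_append] at hnd2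
    obtain ⟨nd₁, nd₂', disj12⟩ := hnd2
    have het₂ : e ∉ t₂.map Prod.fst := (List.nodup_cons.mp nd₂').1
    have het₁ : e ∉ t₁.map Prod.fst := fun h => disj12 e h e List.mem_cons_self rfl
    have hmemt : ∀ z, z ∈ t₁.map Prod.fst ++ e :: t₂.map Prod.fst → z ∈ t.map Prod.fst := by
      intro z h; rw [hteq, map_append, map_cons]; exact h
    -- end sign of (ω :: w₂)
    have hwlast : (((e, d') :: w₂).getLast?.map G.tsign).getD (!α) = !α := by
      rw [hweq] at hwend
      rwa [getLast?_append_of_ne_nil _ (by simp)] at hwend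
    by_cases hd' : d' = d
    · -- same direction: splice the tail of `w` onto the prefix of `t`
      subst hd'
      have hA2 : G.IsDitrail (t₁ ++ [(e, d')]) x (G.tgt (e, d')) := by
        refine appendD htA (singleD (e, d')) ?_ ?_
        · intro a c ha hc
          cases hc
          exact (hJA a ha).2
        · intro st hst
          rw [List.mem_singleton] at hst; subst hst
          exact het₁
      have hP : G.IsDitrail (t₁ ++ (e, d') :: w₂) x r := by
        rw [show t₁ ++ (e, d') :: w₂ = (t₁ ++ [(e, d')]) ++ w₂ by simp]
        refine appendD hA2 hwB ?_ ?_
        · intro a c ha hc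
          rw [getLast?_concat] at ha
          cases ha
          exact (hwJB c hc).2
        · intro st hst hmem
          refine hw₂ st hst (hmemt _ ?_)
          rw [map_append, map_cons] at hmem
          rcases List.mem_append.mp hmem with h | h
          · exact List.mem_append.mpr (Or.inl h)
          · have h' : st.1 = e := by simpa using h
            rw [h']
            exact List.mem_append.mpr (Or.inr List.mem_cons_self)
      refine reach_intro hP ?_ ?_
      · rw [Bool.not_not, head?_append_cons t₁ (e, d') w₂ t₂, ← hteq]
        exact htβ
      · rw [getLast?_append_of_ne_nil _ (by simp : (e, d') :: w₂ ≠ [])]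
        exact hwlast
    · -- opposite direction: reversal gives a `(!α,!α)`-ditrail from `u` to `r`
      exfalso
      apply hu
      obtain rfl : d' = !d := by revert hd'; cases d <;> cases d' <;> simp
      have hτcons : G.IsDitrail ((e, d) :: t₂) (G.src (e, d)) u := by
        refine appendD (B := t₂) (singleD (e, d)) htB ?_ ?_
        · intro a c ha hc
          cases ha
          exact (hJB c hc).2
        · intro st hst hmem
          have h' : st.1 = e := by simpa using hmem
          exact het₂ (by rw [← h']; exact List.mem_map_of_mem (f := Prod.fst) hst)
      have hR := reverseD hτcons
      have hwB' : G.IsDitrail w₂ (G.src (e, d)) r := by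
        rwa [show G.tgt (e, !d) = G.src (e, d) from tgt_rev (e, d)] at hwB
      have hRlast : (((e, d) :: t₂).reverse.map (rev G)).getLast? = some (e, !d) := by
        rw [getLast?_map, getLast?_reverse]
        rfl
      have hQ : G.IsDitrail ((((e, d) :: t₂).reverse.map (rev G)) ++ w₂) u r := by
        refine appendD hR hwB' ?_ ?_
        · intro a c ha hc
          rw [hRlast] at ha
          cases ha
          exact (by
            have := (hwJB c hc).2
            exact this : G.tsign (e, !d) = !G.ssign c)
        · intro st hst hmem
          refine hw₂ st hst (hmemt _ ?_)
          rw [map_map] at hmem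
          have : st.1 ∈ ((e, d) :: t₂).reverse.map Prod.fst := by
            simpa using hmem
          rw [map_reverse, mem_reverse, map_cons] at this
          exact List.mem_append.mpr (Or.inr this)
      refine reach_intro hQ ?_ ?_
      · -- starts at `u` with sign !α
        rw [Bool.not_not]
        cases hgl : ((e, d) :: t₂).getLast? with
        | none => simp at hgl
        | some lastT =>
          have hglt : t.getLast? = some lastT := by
            rw [hteq, getLast?_append_of_ne_nil _ (by simp)]
            exact hgl
          have hhd : ((((e, d) :: t₂).reverse.map (rev G)) ++ w₂).head? = some (rev G lastT) := by
            rw [head?_append_of_ne_nil _ (by simp), head?_map, head?_reverse, hgl]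
            rfl
          rw [hhd]
          simp only [Option.map_some, Option.getD_some, ssign_rev]
          exact htend lastT hglt
      · -- ends with sign !α
        cases w₂ with
        | nil =>
          rw [append_nil, hRlast]
          simpa using hwlast
        | cons c w₂' =>
          rw [getLast?_append_of_ne_nil _ (by simp)]
          rwa [List.getLast?_cons_cons] at hwlast
  · -- no shared edges: just concatenate
    have hP : G.IsDitrail (t ++ w) x r :=
      appendD ht hw (fun a c ha hc => by rw [htend a ha, hwα c hc])
        (fun st hst hmem => hshare ⟨st, hst, hmem⟩)
    refine reach_intro hP ?_ ?_
    · rw [Bool.not_not]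
      cases t with
      | nil =>
        have hβ : α = β := by simpa using htβ
        rw [nil_append, ← hβ]
        cases w with
        | nil => rfl
        | cons c w' => simp [hwα c rfl]
      | cons a0 t' =>
        rw [head?_append_of_ne_nil _ (by simp)]
        exact htβ
    · cases w with
      | nil =>
        rw [append_nil]
        cases hgl : t.getLast? with
        | none => rfl
        | some st => simp [htend st hgl]
      | cons c w' =>
        rw [getLast?_append_of_ne_nil _ (by simp)]
        exact hwend

/-- forward direction of the main theorem, by strong induction on trail length -/
lemma fwd {F : Type} (G : BG V) (α : Bool) (S : Set V) (r : V) (hr : r ∈ S)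
    (hradial : ∀ v ∈ S, G.ReachW (G.inducedEdges S) α (!α) v r)
    (a b : F → V) (sa sb : F → Bool)
    (hends : ∀ f : F, a f ∈ S ∧ ¬ G.Reach (!α) (!α) (a f) r ∧ b f ∉ S ∧ sa f = α) :
    ∀ (n : ℕ) (p : List (G.addE a b sa sb).Step) (x : V) (β : Bool), p.length ≤ n →
      (G.addE a b sa sb).IsDitrail p x r →
      (p.head?.map (G.addE a b sa sb).ssign).getD α = β →
      (p.getLast?.map (G.addE a b sa sb).tsign).getD (!α) = !α →
      G.Reach β (!α) x r := by
  intro n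
  induction n with
  | zero =>
    intro p x β hlen hp hhd hls
    have hp0 : p = [] := List.length_eq_zero_iff.mp (Nat.le_zero.mp hlen)
    subst hp0
    have hx : x = r := hp.2.2.2.2 rfl
    have hβ : α = β := by simpa using hhd
    rw [hx, ← hβ]
    obtain ⟨q, h1, _, h3, h4, h5, h6⟩ := hradial r hr
    exact ⟨q, h1, fun _ _ => Set.mem_univ _, h3, h4, h5, h6⟩
  | succ n ih =>
    intro p x β hlen hp hhd hls
    rcases listSplit p with ⟨q, rfl⟩ | ⟨q₁, f, d, q₂, rfl⟩
    · -- no new edges: the trail already lives in `G`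
      have hq := unlift_ditrail hp
      refine ⟨q, hq, fun _ _ => Set.mem_univ _, Set.notMem_empty x,
        fun _ _ => Set.notMem_empty _, ?_, ?_⟩
      · rw [lift_head_ssign] at hhd
        rw [Bool.not_not]
        exact hhd
      · rw [lift_getLast_tsign] at hls
        exact hls
    · -- `(Sum.inr f, d)` is the first new-edge step
      obtain ⟨hA, hB, hJA, hJB⟩ := split hp rfl
      have hq₂len : q₂.length ≤ n := by
        rw [List.length_append, List.length_cons] at hlen
        omega
      cases d
      · -- the step arrives at `a f` carrying sign `α` there
        exfalso
        cases q₂ with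
        | nil =>
          have hlast : (G.addE a b sa sb).tsign (Sum.inr f, false) = !α := by
            rw [getLast?_append_of_ne_nil _ (by simp)] at hls
            simpa using hls
          rw [addE_tsign_inr_false, (hends f).2.2.2] at hlast
          simp at hlast
        | cons c q₂' =>
          apply (hends f).2.1
          have hsc : (G.addE a b sa sb).ssign c = !α := by
            have h3 := (hJB c rfl).2
            rw [addE_tsign_inr_false, (hends f).2.2.2] at h3
            rw [h3, Bool.not_not]
          refine ih (c :: q₂') (a f) (!α) hq₂len ?_ ?_ ?_
          · exact hB
          · simp only [head?_cons, Option.map_some, Option.getD_some]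
            exact hsc
          · rw [getLast?_append_of_ne_nil _ (by simp), List.getLast?_cons_cons] at hls
            exact hls
      · -- the step leaves `a f` carrying sign `α` there
        obtain ⟨w, hw, _, _, _, hwhd, hwend⟩ := hradial (a f) (hends f).1
        have hwα : ∀ st, w.head? = some st → G.ssign st = α := by
          intro st hst
          rw [hst] at hwhd
          simpa using hwhd
        cases q₁ with
        | nil =>
          have hx : x = (G.addE a b sa sb).src (Sum.inr f, true) := hA.2.2.2.2 rfl
          have hβ : β = α := by
            simp only [map_nil, nil_append, head?_cons, Option.map_some, Option.getD_some,
              addE_ssign_inr_true] at hhd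
            rw [← hhd]
            exact (hends f).2.2.2
          rw [hx, hβ]
          exact ⟨w, hw, fun _ _ => Set.mem_univ _, Set.notMem_empty _,
            fun _ _ => Set.notMem_empty _, hwhd, hwend⟩
        | cons st0 q₁' =>
          have ht : G.IsDitrail (st0 :: q₁') x (a f) := unlift_ditrail hA
          refine concat_reach (st0 :: q₁') w ht hw ?_ ?_ hwα hwend (hends f).2.1
          · rw [head?_append_of_ne_nil _ (by simp), lift_head_ssign] at hhd
            exact hhd
          · intro st hst
            have h4 := (hJA (lift a b sa sb st) (by rw [getLast?_map, hst]; rfl)).2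
            rw [lift_tsign, addE_ssign_inr_true, (hends f).2.2.2] at h4
            exact h4

end BGaux

theorem stmt2 {V : Type} (G : BG V) (α : Bool) (S : Set V) (r : V) (hr : r ∈ S)
    (hradial : ∀ v ∈ S, G.ReachW (G.inducedEdges S) α (!α) v r)
    (hnbr : ∀ u ∈ S, (∃ v, v ∉ S ∧ G.Adj u v) → ¬ G.Reach (!α) (!α) u r)
    {F : Type} (a b : F → V) (sa sb : F → Bool)
    (hends : ∀ f : F, a f ∈ S ∧ ¬ G.Reach (!α) (!α) (a f) r ∧ b f ∉ S ∧ sa f = α) :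
    ∀ (β : Bool) (x : V),
      (G.addE a b sa sb).Reach β (!α) x r ↔ G.Reach β (!α) x r := by
  intro β x
  constructor
  · rintro ⟨p, hp, -, -, -, hhd, hls⟩
    rw [Bool.not_not] at hhd
    exact BGaux.fwd G α S r hr hradial a b sa sb hends p.length p x β le_rfl hp hhd hls
  · rintro ⟨q, hq, -, -, -, hhd, hls⟩
    refine ⟨q.map (BGaux.lift a b sa sb), BGaux.lift_ditrail hq, fun _ _ => Set.mem_univ _,
      Set.notMem_empty x, fun _ _ => Set.notMem_empty _, ?_, ?_⟩
    · rw [BGaux.lift_head_ssign]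
      exact hhd
    · rw [BGaux.lift_getLast_tsign]
      exact hls
end

section
/- Let G be a bidirected graph, r ∈ V(G), and S a vertex set with r ∈ S ⊊ V(G). Let x ∈ V(G)∖S and y ∈ S be adjacent via an edge e, and let β be the sign of x over e. If G has a (−β)-ditrail from x to r, then there exists a diear relative to S that is either (i) a simple diear starting with (y,e,x) or ending with (x,e,y), or (ii) a scoop diear whose grip is e. -/
section Stmt5Aux

lemma head?_append_left {α : Type*} {l₁ : List α} (l₂ : List α) (h : l₁ ≠ []) :
    (l₁ ++ l₂).head? = l₁.head? := by
  cases l₁ with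
  | nil => exact absurd rfl h
  | cons a t => simp

lemma BG.tgt_rev {V : Type} (G : BG V) (e : G.E) (d : Bool) :
    G.tgt (e, !d) = G.src (e, d) := by
  cases d <;> simp [BG.src, BG.tgt]

end Stmt5Aux

theorem stmt5 {V : Type} (G : BG V) (r : V) (S : Set V) (hrS : r ∈ S)
    (hS : ∃ v, v ∉ S)
    (e : G.E) (d : Bool) (x y : V)
    (hy : G.src (e, d) = y) (hx : G.tgt (e, d) = x)
    (hxS : x ∉ S) (hyS : y ∈ S)
    (β : Bool) (hβ : β = G.tsign (e, d))
    (hreach : G.ReachS (!β) x r) :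
    ∃ p : List G.Step,
      (G.IsSimpleDiear S p ∧ (p.head? = some (e, d) ∨ p.getLast? = some (e, !d))) ∨
      G.IsScoopDiear S e p := by
    classical
  obtain ⟨β', p, ⟨hnodup, hchain, hsrcp, htgtp, hemp⟩, -, -, -, hhead, -⟩ := hreach
  have hxy : x ≠ y := fun h => hxS (h ▸ hyS)
  have hpne : p ≠ [] := fun h => hxS (hemp h ▸ hrS)
  obtain ⟨h0, hh0⟩ : ∃ h0, p.head? = some h0 := by
    cases p with
    | nil => exact absurd rfl hpne
    | cons a t => exact ⟨a, rfl⟩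
  have hsign0 : G.ssign h0 = !β := by
    rw [hh0] at hhead; simpa using hhead
  set Pb : G.Step → Bool := fun st => decide (G.tgt st ∉ S ∧ st.1 ≠ e) with hPb
  have hsplit : p.takeWhile Pb ++ p.dropWhile Pb = p := List.takeWhile_append_dropWhile
  set q1 := p.takeWhile Pb with hq1def
  have hq1 : ∀ st ∈ q1, G.tgt st ∉ S ∧ st.1 ≠ e := by
    intro st hst
    have := List.mem_takeWhile_imp hst
    simpa [hPb] using this
  have hrne : p.dropWhile Pb ≠ [] := by
    intro h
    have hq1p : q1 = p := by conv_rhs => rw [← hsplit, h, List.append_nil]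
    obtain ⟨lst, hlst⟩ : ∃ lst, p.getLast? = some lst := by
      cases hl : p.getLast? with
      | none => exact absurd (List.getLast?_isSome.mpr hpne) (by rw [hl]; simp)
      | some a => exact ⟨a, rfl⟩
    have hmem : lst ∈ p := List.mem_of_getLast? hlst
    exact (hq1 lst (hq1p ▸ hmem)).1 (htgtp lst hlst ▸ hrS)
  obtain ⟨a, rest', hrest⟩ := List.exists_cons_of_ne_nil hrne
  have ha : ¬ (G.tgt a ∉ S ∧ a.1 ≠ e) := by
    have := List.head?_dropWhile_not Pb p
    rw [hrest] at this
    simp only [List.head?_cons] at this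
    intro hcontra
    rw [show Pb a = true by simpa [hPb] using hcontra] at this
    exact Bool.true_eq_false.mp this
  have hp : p = q1 ++ a :: rest' := by conv_lhs => rw [← hsplit, hrest]
  have hprefix : (q1 ++ [a]) <+: p := ⟨rest', by rw [hp]; simp⟩
  have nodup_pre : ((q1 ++ [a]).map Prod.fst).Nodup :=
    hnodup.sublist (hprefix.map Prod.fst).sublist
  have chain_pre : List.Chain' (fun a b => G.tgt a = G.src b ∧ G.tsign a = !G.ssign b)
      (q1 ++ [a]) := hchain.prefix hprefix
  have head_pre : (q1 ++ [a]).head? = some h0 := by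
    have h1 : p.head? = (q1 ++ [a]).head? := by
      rw [hp]; cases q1 <;> simp
    rw [← h1, hh0]
  have hR0 : ∀ b, (q1 ++ [a]).head? = some b →
      G.tgt (e, d) = G.src b ∧ G.tsign (e, d) = !G.ssign b := by
    intro b hb
    rw [head_pre] at hb
    obtain rfl : h0 = b := Option.some.inj hb
    constructor
    · rw [hx]; exact (hsrcp h0 hh0).symm
    · rw [hsign0, Bool.not_not]; exact hβ.symm
  by_cases he : a.1 = e
  · -- the edge e is hit first: a must be (e, !d)
    have had : a = (e, !d) := by
      rcases Bool.eq_or_eq_not a.2 d with h2 | h2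
      · exfalso
        have had2 : a = (e, d) := by rw [← he, ← h2]
        rcases List.eq_nil_or_concat' q1 with hq | ⟨q1', b, hq⟩
        · have hha : p.head? = some a := by rw [hp, hq, List.nil_append, List.head?_cons]
          rw [hh0] at hha
          obtain rfl := Option.some.inj hha
          rw [had2] at hsign0
          exact hxy ((hsrcp _ hh0).symm.trans (had2 ▸ hy))
        · have hinf : [b, a] <:+: p := ⟨q1', rest', by rw [hp, hq]; simp⟩
          have hR := List.isChain_pair.mp (hchain.infix hinf)
          have hbS : G.tgt b ∈ S := by rw [hR.1, had2, hy]; exact hyS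
          exact (hq1 b (by rw [hq]; simp)).1 hbS
      · rw [← he, ← h2]
    subst had
    refine ⟨(e, d) :: (q1 ++ [(e, !d)]), Or.inr ⟨d, q1 ++ [(e, !d)], rfl, ?_, ?_, ?_, ?_, ?_, ?_⟩⟩
    · rw [hy]; exact hyS
    · rw [hx]; exact hxS
    · refine ⟨nodup_pre, chain_pre, ?_, ?_, ?_⟩
      · intro st hst
        rw [head_pre] at hst
        obtain rfl := Option.some.inj hst
        rw [hx]; exact hsrcp h0 hh0
      · intro st hst
        rw [List.getLast?_concat] at hst
        obtain rfl := Option.some.inj hst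
        exact G.tgt_rev e d
      · intro h; simp at h
    · exact List.getLast?_concat
    · intro st hst
      rw [head_pre] at hst
      obtain rfl := Option.some.inj hst
      rw [hsign0, hβ]
    · intro w hw
      rw [List.dropLast_concat] at hw
      obtain ⟨st, hst, rfl⟩ := List.mem_map.mp hw
      exact (hq1 st hst).1
  · -- simple diear case
    have htaS : G.tgt a ∈ S := by
      by_contra htaS
      exact ha ⟨htaS, he⟩
    refine ⟨(e, d) :: (q1 ++ [a]), Or.inl ⟨⟨by simp, y, G.tgt a, ⟨?_, ?_, ?_, ?_, ?_⟩,
      hyS, htaS, ?_⟩, Or.inl rfl⟩⟩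
    · rw [List.map_cons]
      refine List.nodup_cons.mpr ⟨?_, nodup_pre⟩
      intro hmem
      obtain ⟨st, hst, hste⟩ := List.mem_map.mp hmem
      rcases List.mem_append.mp hst with h | h
      · exact (hq1 st h).2 hste
      · rw [List.mem_singleton.mp h] at hste; exact he hste
    · exact List.isChain_cons.mpr ⟨hR0, chain_pre⟩
    · intro st hst
      obtain rfl := Option.some.inj hst
      exact hy
    · intro st hst
      rw [show (e, d) :: (q1 ++ [a]) = ((e, d) :: q1) ++ [a] by simp,
        List.getLast?_concat] at hst
      obtain rfl := Option.some.inj hst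
      rfl
    · intro h; simp at h
    · intro w hw
      rw [show (e, d) :: (q1 ++ [a]) = ((e, d) :: q1) ++ [a] by simp,
        List.dropLast_concat, List.map_cons] at hw
      rcases List.mem_cons.mp hw with h | h
      · rw [h, hx]; exact hxS
      · obtain ⟨st, hst, rfl⟩ := List.mem_map.mp h
        exact (hq1 st hst).1
end
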